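/- arXiv:math/9912232 — 8 statements merged into one kernel-verified Lean document; each statement's English description precedes it below -/
import Mathlib

section
/- Let (V, ω) be a finite-dimensional real symplectic vector space, 𝔤 a finite-dimensional real Lie algebra, ρ : 𝔤 → End(V) a Lie algebra homomorphism such that each ρ(ξ) is infinitesimally symplectic, and J : V → 𝔤* a continuously differentiable map satisfying ⟨DJ(z)·u, ξ⟩ = ω(ρ(ξ)z, u) for all z, u ∈ V, ξ ∈ 𝔤, and the infinitesimal equivariance condition ⟨DJ(z)·(ρ(ζ)z), ξ⟩ = −⟨J(z), [ζ, ξ]⟩ for all z ∈ V, ζ, ξ ∈ 𝔤. Fix m ∈ V, set μ := J(m), 𝔤_m := {ξ ∈ 𝔤 : ρ(ξ)m = 0}, and 𝔤_μ := {ξ ∈ 𝔤 : ⟨μ, [ξ, η]⟩ = 0 for all η}. Choose subspaces 𝔪 with 𝔤_μ = 𝔤_m ⊕ 𝔪 and 𝔮 with 𝔤 = 𝔤_μ ⊕ 𝔮, let P_𝔪 : 𝔤 → 𝔪 be the associated projection, let V₀ ⊆ V be a subspace with ker(DJ(m)) = V₀ ⊕ {ρ(β)m : β ∈ 𝔪},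 and let W ⊆ V be a subspace such that DJ(m) restricts to a linear isomorphism A from W onto the annihilator of 𝔤_m ⊕ 𝔮 in 𝔤*. Define Ψ : 𝔪* × V₀ → V by Ψ(η, v) := m + v + A⁻¹(η ∘ P_𝔪). Then: (SM1) Ψ(0,0) = m; (SM3) DJ(m)·(DΨ(0,0)(δη, δv)) = δη ∘ P_𝔪 for all δη ∈ 𝔪*, δv ∈ V₀; and (SM2) there is a neighborhood U of (0,0) in 𝔪* × V₀ such that for every (η, v) ∈ U one has V = {ρ(ξ)(Ψ(η, v)) : ξ ∈ 𝔪 ⊕ 𝔮} + V₀ + W. -/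
attribute [local instance 100] LieRing.ofAssociativeRing

/-!
Write `D := DJ(m₀)` and `E ξ := ρ ξ m₀`. Equivariance makes `D ∘ E` skew with kernel `𝔤_μ`, so its
range is the annihilator of `𝔤_μ`, and it is already attained on `𝔮`. Since `D` takes values in
`ann 𝔤_m = ann (𝔤_m ⊕ 𝔮) + ann 𝔤_μ`, every `D u` is the image of an element of `W + E 𝔮`, and what
is left of `u` lies in `ker D = V₀ + E 𝔪`; hence `V = E (𝔪 ⊕ 𝔮) + V₀ + W`. Surjectivity of
`(ζ, v, w) ↦ ρ ζ z + v + w` is an open condition on `z`, which gives (SM2) near `m₀`; (SM1) and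
(SM3) hold because `Ψ` is affine.
-/

open Filter Topology Module LinearMap Submodule

theorem LinearMap.eventually_surjective_of_continuous_apply {𝕜 X E F : Type*}
    [NontriviallyNormedField 𝕜] [CompleteSpace 𝕜] [TopologicalSpace X]
    [AddCommGroup E] [Module 𝕜 E] [NormedAddCommGroup F] [NormedSpace 𝕜 F]
    [FiniteDimensional 𝕜 F] {L : X → E →ₗ[𝕜] F} (hL : ∀ e, Continuous fun x ↦ L x e)
    {x₀ : X} (hx₀ : Function.Surjective (L x₀)) :
    ∀ᶠ x in 𝓝 x₀, Function.Surjective (L x) := by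
  obtain ⟨R, hR⟩ := (L x₀).exists_rightInverse_of_surjective (range_eq_top.mpr hx₀)
  -- `L x ∘ R` is a continuous family of endomorphisms of `F`, equal to the identity at `x₀`.
  let G : X → F →L[𝕜] F := fun x ↦ (L x ∘ₗ R).toContinuousLinearMap
  have := FiniteDimensional.complete 𝕜 F
  have hG : Continuous G := continuous_clm_apply.mpr fun y ↦ hL (R y)
  have hG₀ : G x₀ = 1 := by
    ext y
    exact congr($hR y)
  filter_upwards [hG.continuousAt.eventually (Units.isOpen.mem_nhds (hG₀ ▸ isUnit_one))]
    with x ⟨u, hu⟩ y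
  refine ⟨R ((↑u⁻¹ : F →L[𝕜] F) y), ?_⟩
  have h := congr($(u.mul_inv) y)
  rw [hu] at h
  exact h

theorem Submodule.eventually_map_sup_eq_top {𝕜 X E F : Type*}
    [NontriviallyNormedField 𝕜] [CompleteSpace 𝕜] [TopologicalSpace X]
    [AddCommGroup E] [Module 𝕜 E] [NormedAddCommGroup F] [NormedSpace 𝕜 F]
    [FiniteDimensional 𝕜 F] {T : X → E →ₗ[𝕜] F} (hT : ∀ e, Continuous fun x ↦ T x e)
    (S : Submodule 𝕜 E) (U : Submodule 𝕜 F) {x₀ : X} (hx₀ : S.map (T x₀) ⊔ U = ⊤) :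
    ∀ᶠ x in 𝓝 x₀, S.map (T x) ⊔ U = ⊤ := by
  have hrange : ∀ x, range ((T x ∘ₗ S.subtype).coprod U.subtype) = S.map (T x) ⊔ U :=
    fun x ↦ by rw [range_coprod, range_comp, range_subtype, range_subtype]
  have hcont : ∀ e, Continuous fun x ↦ (T x ∘ₗ S.subtype).coprod U.subtype e :=
    fun e ↦ (hT e.1).add continuous_const
  filter_upwards [eventually_surjective_of_continuous_apply hcont
    (range_eq_top.mp ((hrange x₀).trans hx₀))] with x hx
  rw [← hrange, range_eq_top.mpr hx]

theorem Subspace.dualAnnihilator_eq_sup_of_le {K V : Type*} [Field K] [AddCommGroup V]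
    [Module K V] {p q r : Submodule K V} (hpq : p ≤ q) (hrq : Disjoint r q) :
    p.dualAnnihilator = (p ⊔ r).dualAnnihilator ⊔ q.dualAnnihilator := by
  rw [← Subspace.dualAnnihilator_inf_eq, sup_inf_assoc_of_le r hpq, hrq.eq_bot, sup_bot_eq]

theorem map_sup_sup_eq_top_of_flip_eq_neg {K V g : Type*} [Field K] [AddCommGroup V] [Module K V]
    [AddCommGroup g] [Module K g] [FiniteDimensional K g]
    (D : V →ₗ[K] Dual K g) (E : g →ₗ[K] V) {gm gμ mm qq : Submodule K g} {V₀ W : Submodule K V}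
    (hskew : (D ∘ₗ E).flip = -(D ∘ₗ E)) (hker_comp : ker (D ∘ₗ E) = gμ)
    (hrange : range D ≤ gm.dualAnnihilator) (hgm : gm ≤ gμ) (hqq : IsCompl gμ qq)
    (hW : (gm ⊔ qq).dualAnnihilator ≤ W.map D) (hker : ker D ≤ V₀ ⊔ mm.map E) :
    (mm ⊔ qq).map E ⊔ (V₀ ⊔ W) = ⊤ := by
  have hrange_comp : gμ.dualAnnihilator = (qq.map E).map D := calc
    gμ.dualAnnihilator = range (D ∘ₗ E) := by
      rw [← hker_comp, dualAnnihilator_ker_eq_range_flip, hskew, range_neg]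
    _ = (gμ ⊔ qq).map (D ∘ₗ E) := by rw [range_eq_map, hqq.sup_eq_top]
    _ = (qq.map E).map D := by
      rw [Submodule.map_sup, ← hker_comp, le_ker_iff_map.mp le_rfl, bot_sup_eq, Submodule.map_comp]
  have hrange' : range D ≤ (W ⊔ qq.map E).map D := by
    rw [Submodule.map_sup, ← hrange_comp]
    rw [Subspace.dualAnnihilator_eq_sup_of_le hgm hqq.disjoint.symm] at hrange
    exact hrange.trans (sup_le_sup_right hW _)
  rw [eq_top_iff, ← range_le_iff_comap.mp hrange', comap_map_eq, Submodule.map_sup]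
  refine sup_le (sup_le ?_ ?_) (hker.trans (sup_le ?_ ?_)) <;> order

theorem stmt_1_general {V g : Type*}
    [NormedAddCommGroup V] [NormedSpace ℝ V] [FiniteDimensional ℝ V]
    [LieRing g] [LieAlgebra ℝ g] [FiniteDimensional ℝ g]
    (ω : V →ₗ[ℝ] V →ₗ[ℝ] ℝ)
    (ρ : g →ₗ⁅ℝ⁆ Module.End ℝ V)
    (J : V → Module.Dual ℝ g)
    (hJmom : ∀ (z u : V) (ξ : g), fderiv ℝ (fun w : V => J w ξ) z u = ω (ρ ξ z) u)
    (hJequiv : ∀ (z : V) (ζ ξ : g),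
      fderiv ℝ (fun w : V => J w ξ) z (ρ ζ z) = - J z ⁅ζ, ξ⁆)
    (m₀ : V)
    (gm gμ mm qq : Submodule ℝ g)
    (hgm : ∀ ξ : g, ξ ∈ gm ↔ ρ ξ m₀ = 0)
    (hgμ : ∀ ξ : g, ξ ∈ gμ ↔ ∀ η : g, J m₀ ⁅ξ, η⁆ = 0)
    (hmm₂ : gm ⊔ mm = gμ)
    (hqq : IsCompl gμ qq)
    (P : g →ₗ[ℝ] mm)
    (V₀ orb W : Submodule ℝ V)
    (horb : ∀ u : V, u ∈ orb ↔ ∃ β ∈ mm, u = ρ β m₀)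
    (hker : ∀ u : V,
      (∀ ξ : g, fderiv ℝ (fun z : V => J z ξ) m₀ u = 0) ↔ u ∈ V₀ ⊔ orb)
    (A : W ≃ₗ[ℝ] ((gm ⊔ qq).dualAnnihilator : Submodule ℝ (Module.Dual ℝ g)))
    (hA : ∀ (w : W) (ξ : g),
      (A w : Module.Dual ℝ g) ξ = fderiv ℝ (fun z : V => J z ξ) m₀ (w : V))
    (hPann : ∀ η : Module.Dual ℝ mm, η.comp P ∈ (gm ⊔ qq).dualAnnihilator)
    (Ψ : Module.Dual ℝ mm × V₀ → V)
    (hΨ : ∀ (η : Module.Dual ℝ mm) (v : V₀),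
      Ψ (η, v) = m₀ + (v : V) + ((A.symm ⟨η.comp P, hPann η⟩ : W) : V)) :
    -- (SM1)
    Ψ (0, 0) = m₀ ∧
    -- (SM3): `DΨ(0,0)(δη, δv) = δv + A⁻¹(δη ∘ P_𝔪)` since `Ψ` is affine
    (∀ (δη : Module.Dual ℝ mm) (δv : V₀) (ξ : g),
      fderiv ℝ (fun z : V => J z ξ) m₀
          ((δv : V) + ((A.symm ⟨δη.comp P, hPann δη⟩ : W) : V)) =
        δη (P ξ)) ∧
    -- (SM2)
    (∃ ε > 0, ∀ (η : Module.Dual ℝ mm) (v : V₀),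
      ‖(v : V) + ((A.symm ⟨η.comp P, hPann η⟩ : W) : V)‖ < ε →
      ∀ u : V, ∃ ζ ∈ mm ⊔ qq, ∃ v₀ ∈ V₀, ∃ w ∈ W,
        u = ρ ζ (Ψ (η, v)) + v₀ + w) := by
  set E : g →ₗ[ℝ] V := ρ.toLinearMap.flip m₀
  set D : V →ₗ[ℝ] Dual ℝ g := (ω ∘ₗ E).flip
  have hD : ∀ u ξ, fderiv ℝ (fun z ↦ J z ξ) m₀ u = D u ξ := hJmom m₀
  have hDE : ∀ ζ ξ, D (E ζ) ξ = -J m₀ ⁅ζ, ξ⁆ := fun ζ ξ ↦ (hD _ ξ).symm.trans (hJequiv m₀ ζ ξ)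
  have hbase : (mm ⊔ qq).map E ⊔ (V₀ ⊔ W) = ⊤ := by
    refine map_sup_sup_eq_top_of_flip_eq_neg D E ?_ ?_ ?_ (hmm₂ ▸ le_sup_left) hqq ?_ ?_
    · ext ζ ξ
      change D (E ξ) ζ = -D (E ζ) ξ
      rw [hDE, hDE, ← lie_skew, map_neg]
    · ext ξ
      simp [hgμ, hDE, LinearMap.ext_iff]
    · rintro _ ⟨u, rfl⟩
      refine (mem_dualAnnihilator _).mpr fun ξ hξ ↦ ?_
      change ω (ρ ξ m₀) u = 0
      rw [(hgm ξ).mp hξ, map_zero, LinearMap.zero_apply]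
    · refine fun φ hφ ↦ ⟨A.symm ⟨φ, hφ⟩, (A.symm _).2, LinearMap.ext fun ξ ↦ ?_⟩
      rw [← hD, ← hA, A.apply_symm_apply]
    · intro u hu
      have horb_le : orb ≤ mm.map E := fun x hx ↦ by
        obtain ⟨β, hβ, rfl⟩ := (horb x).mp hx
        exact ⟨β, hβ, rfl⟩
      exact sup_le_sup_left horb_le V₀ <| (hker u).mp fun ξ ↦ by rw [hD, hu]; rfl
  obtain ⟨ε, hε, hnear⟩ := Metric.eventually_nhds_iff.mp <|
    Submodule.eventually_map_sup_eq_top (T := ρ.toLinearMap.flip)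
      (fun ξ ↦ (ρ ξ).continuous_of_finiteDimensional) _ _ hbase
  refine ⟨by simp [hΨ], fun δη δv ξ ↦ ?_, ε, hε, fun η v hv u ↦ ?_⟩
  · rw [map_add, (hker _).mpr (mem_sup_left δv.2) ξ, zero_add, ← hA, A.apply_symm_apply]
    rfl
  · have hspan := hnear (y := Ψ (η, v)) <| by
      rwa [hΨ, dist_eq_norm, add_assoc, add_sub_cancel_left]
    obtain ⟨_, ⟨ζ, hζ, rfl⟩, _, hvw, hu⟩ := mem_sup.mp (hspan ▸ Submodule.mem_top : u ∈ _)
    obtain ⟨v₀, hv₀, w, hw, rfl⟩ := mem_sup.mp hvw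
    exact ⟨ζ, hζ, v₀, hv₀, w, hw, by rw [← hu, add_assoc]; rfl⟩

/-- Construction of a slice mapping (Proposition 2.2 of the paper, in the linear
category): with `Ψ(η, v) := m₀ + v + A⁻¹(η ∘ P_𝔪)` one has (SM1) `Ψ(0,0) = m₀`,
(SM3) `DJ(m₀)·(DΨ(0,0)(δη, δv)) = δη ∘ P_𝔪`, and (SM2) near the origin
`V = (𝔪 ⊕ 𝔮)·Ψ(η,v) + V₀ + W`. -/
theorem stmt_1 {V g : Type*}
    [NormedAddCommGroup V] [NormedSpace ℝ V] [FiniteDimensional ℝ V]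
    [LieRing g] [LieAlgebra ℝ g] [FiniteDimensional ℝ g]
    (ω : V →ₗ[ℝ] V →ₗ[ℝ] ℝ)
    (halt : ∀ v : V, ω v v = 0)
    (hnondeg : ∀ v : V, (∀ u : V, ω v u = 0) → v = 0)
    (ρ : g →ₗ⁅ℝ⁆ Module.End ℝ V)
    (hinfsymp : ∀ (ξ : g) (u w : V), ω (ρ ξ u) w + ω u (ρ ξ w) = 0)
    (J : V → Module.Dual ℝ g)
    (hJC1 : ∀ ξ : g, ContDiff ℝ 1 fun z : V => J z ξ)
    (hJmom : ∀ (z u : V) (ξ : g), fderiv ℝ (fun w : V => J w ξ) z u = ω (ρ ξ z) u)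
    (hJequiv : ∀ (z : V) (ζ ξ : g),
      fderiv ℝ (fun w : V => J w ξ) z (ρ ζ z) = - J z ⁅ζ, ξ⁆)
    (m₀ : V)
    (gm gμ mm qq : Submodule ℝ g)
    (hgm : ∀ ξ : g, ξ ∈ gm ↔ ρ ξ m₀ = 0)
    (hgμ : ∀ ξ : g, ξ ∈ gμ ↔ ∀ η : g, J m₀ ⁅ξ, η⁆ = 0)
    (hmm₁ : Disjoint gm mm) (hmm₂ : gm ⊔ mm = gμ)
    (hqq : IsCompl gμ qq)
    (P : g →ₗ[ℝ] mm)
    (hP₁ : ∀ x : g, x ∈ mm → (P x : g) = x)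
    (hP₂ : ∀ x : g, x ∈ gm → P x = 0)
    (hP₃ : ∀ x : g, x ∈ qq → P x = 0)
    (V₀ orb W : Submodule ℝ V)
    (horb : ∀ u : V, u ∈ orb ↔ ∃ β ∈ mm, u = ρ β m₀)
    (hdis : Disjoint V₀ orb)
    (hker : ∀ u : V,
      (∀ ξ : g, fderiv ℝ (fun z : V => J z ξ) m₀ u = 0) ↔ u ∈ V₀ ⊔ orb)
    (A : W ≃ₗ[ℝ] ((gm ⊔ qq).dualAnnihilator : Submodule ℝ (Module.Dual ℝ g)))
    (hA : ∀ (w : W) (ξ : g),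
      (A w : Module.Dual ℝ g) ξ = fderiv ℝ (fun z : V => J z ξ) m₀ (w : V))
    (hPann : ∀ η : Module.Dual ℝ mm, η.comp P ∈ (gm ⊔ qq).dualAnnihilator)
    (Ψ : Module.Dual ℝ mm × V₀ → V)
    (hΨ : ∀ (η : Module.Dual ℝ mm) (v : V₀),
      Ψ (η, v) = m₀ + (v : V) + ((A.symm ⟨η.comp P, hPann η⟩ : W) : V)) :
    -- (SM1)
    Ψ (0, 0) = m₀ ∧
    -- (SM3): `DΨ(0,0)(δη, δv) = δv + A⁻¹(δη ∘ P_𝔪)` since `Ψ` is affine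
    (∀ (δη : Module.Dual ℝ mm) (δv : V₀) (ξ : g),
      fderiv ℝ (fun z : V => J z ξ) m₀
          ((δv : V) + ((A.symm ⟨δη.comp P, hPann δη⟩ : W) : V)) =
        δη (P ξ)) ∧
    -- (SM2)
    (∃ ε > 0, ∀ (η : Module.Dual ℝ mm) (v : V₀),
      ‖(v : V) + ((A.symm ⟨η.comp P, hPann η⟩ : W) : V)‖ < ε →
      ∀ u : V, ∃ ζ ∈ mm ⊔ qq, ∃ v₀ ∈ V₀, ∃ w ∈ W,
        u = ρ ζ (Ψ (η, v)) + v₀ + w) :=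
  stmt_1_general ω ρ J hJmom hJequiv m₀ gm gμ mm qq hgm hgμ hmm₂ hqq P V₀ orb W horb hker A hA hPann
    Ψ hΨ
end

section
/- Let (V, ω) be a finite-dimensional real symplectic vector space, 𝔤 a finite-dimensional real Lie algebra, ρ : 𝔤 → End(V) a Lie algebra homomorphism by infinitesimally symplectic operators, and J : V → 𝔤* continuously differentiable with ⟨DJ(z)·(ρ(ζ)z), ξ⟩ = −⟨J(z), [ζ, ξ]⟩ for all z ∈ V, ζ, ξ ∈ 𝔤. Let h : V → ℝ be continuously differentiable and infinitesimally invariant: Dh(z)·(ρ(ζ)z) = 0 for all z ∈ V, ζ ∈ 𝔤. Let 𝔪 and 𝔮 be subspaces of 𝔤, let 𝔪* × V₀ be a product of finite-dimensional real vector spaces, and let Ψ : 𝔪* × V₀ → V be a differentiable map. Fix ξ ∈ 𝔤 and a point (η, v) ∈ 𝔪* × V₀ at which the decomposition V = {ρ(ζ)(Ψ(η, v)) : ζ ∈ 𝔪 ⊕ 𝔮} + range(DΨ(η, v)) holds. Set H := h ∘ Ψ and j := J ∘ Ψ. Then D(h − ⟨J(·), ξ⟩)(Ψ(η, v)) = 0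 if and only if all four of the following conditions hold: (RE1) ⟨j(η, v), [ξ, γ]⟩ = 0 for all γ ∈ 𝔮; (RE2) ⟨j(η, v), [ξ, β]⟩ = 0 for all β ∈ 𝔪; (RE3) D(H − ⟨j(·), ξ⟩)(η, v)·(δη, 0) = 0 for all δη ∈ 𝔪*; (RE4) D(H − ⟨j(·), ξ⟩)(η, v)·(0, δv) = 0 for all δv ∈ V₀. -/
attribute [local instance 100] LieRing.ofAssociativeRing

/-! The differential `L := D(h − ⟨J(·), ξ⟩)(Ψ(η, v))` vanishes iff it vanishes on each summand
of `V = 𝔪·Ψ(η, v) + 𝔮·Ψ(η, v) + range DΨ(η, v)`. On `range DΨ(η, v)` the chain rule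
identifies `L ∘ DΨ(η, v)` with `D(H − ⟨j(·), ξ⟩)(η, v)`, whose vanishing splits along
`𝔪* × V₀` into (RE3) and (RE4). On an orbit direction `ρ(ζ)z`, invariance of `h` and
equivariance of `J` give `L(ρ(ζ)z) = ⟨J(z), [ζ, ξ]⟩ = −⟨J(z), [ξ, ζ]⟩`, which turns the other
two summands into (RE1) and (RE2). -/

theorem forall_map_eq_zero_iff_of_forall_eq_add {R g E V W F : Type*} [Semiring R]
    [AddCommMonoid g] [Module R g] [AddCommMonoid V] [Module R V] [AddCommMonoid W]
    [FunLike F V W] [AddMonoidHomClass F V W] (L : F) (A : g →ₗ[R] V) (T : E → V)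
    {m q : Submodule R g} (hdecomp : ∀ u : V, ∃ ζ ∈ m ⊔ q, ∃ p : E, u = A ζ + T p) :
    (∀ u, L u = 0) ↔
      (∀ γ ∈ q, L (A γ) = 0) ∧ (∀ β ∈ m, L (A β) = 0) ∧ ∀ p, L (T p) = 0 := by
  refine ⟨fun hL => ⟨fun γ _ => hL _, fun β _ => hL _, fun p => hL _⟩, ?_⟩
  rintro ⟨hq, hm, hT⟩ u
  obtain ⟨ζ, hζ, p, rfl⟩ := hdecomp u
  obtain ⟨β, hβ, γ, hγ, rfl⟩ := Submodule.mem_sup.1 hζ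
  rw [map_add, map_add, map_add, hm β hβ, hq γ hγ, hT p, add_zero, add_zero]

theorem forall_prod_map_eq_zero_iff {E₁ E₂ W F : Type*} [AddCommMonoid E₁] [AddCommMonoid E₂]
    [AddCommMonoid W] [FunLike F (E₁ × E₂) W] [AddMonoidHomClass F (E₁ × E₂) W] (L : F) :
    (∀ p, L p = 0) ↔ (∀ x₁, L (x₁, 0) = 0) ∧ ∀ x₂, L (0, x₂) = 0 := by
  refine ⟨fun hL => ⟨fun _ => hL _, fun _ => hL _⟩, ?_⟩
  rintro ⟨h₁, h₂⟩ ⟨x₁, x₂⟩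
  rw [← add_zero x₁, ← zero_add x₂, ← Prod.mk_add_mk, map_add, h₁, h₂, add_zero]

theorem fderiv_sub_momentum_apply_rho {V g : Type*} [NormedAddCommGroup V] [NormedSpace ℝ V]
    [LieRing g] [LieAlgebra ℝ g] (ρ : g →ₗ⁅ℝ⁆ Module.End ℝ V) (J : V → Module.Dual ℝ g)
    (h : V → ℝ) {z : V} {ζ ξ : g} (hh : DifferentiableAt ℝ h z)
    (hJ : DifferentiableAt ℝ (fun w => J w ξ) z) (hhinv : fderiv ℝ h z (ρ ζ z) = 0)
    (hJequiv : fderiv ℝ (fun w => J w ξ) z (ρ ζ z) = -J z ⁅ζ, ξ⁆) :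
    fderiv ℝ (fun w => h w - J w ξ) z (ρ ζ z) = -J z ⁅ξ, ζ⁆ := by
  rw [fderiv_fun_sub hh hJ, sub_apply, hhinv, hJequiv, ← lie_skew ζ ξ, map_neg,
    zero_sub, neg_neg]

theorem stmt_2_general {V g M' V₀ : Type*}
    [NormedAddCommGroup V] [NormedSpace ℝ V]
    [LieRing g] [LieAlgebra ℝ g]
    [NormedAddCommGroup M'] [NormedSpace ℝ M']
    [NormedAddCommGroup V₀] [NormedSpace ℝ V₀]
    (ρ : g →ₗ⁅ℝ⁆ Module.End ℝ V)
    (J : V → Module.Dual ℝ g)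
    (hJC1 : ∀ ξ : g, ContDiff ℝ 1 fun z : V => J z ξ)
    (hJequiv : ∀ (z : V) (ζ ξ : g),
      fderiv ℝ (fun w : V => J w ξ) z (ρ ζ z) = - J z ⁅ζ, ξ⁆)
    (h : V → ℝ) (hhC1 : ContDiff ℝ 1 h)
    (hhinv : ∀ (z : V) (ζ : g), fderiv ℝ h z (ρ ζ z) = 0)
    (m q : Submodule ℝ g)
    (Ψ : M' × V₀ → V) (hΨdiff : Differentiable ℝ Ψ)
    (ξ : g) (η : M') (v : V₀)
    (hdecomp : ∀ u : V, ∃ ζ ∈ m ⊔ q, ∃ p : M' × V₀,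
      u = ρ ζ (Ψ (η, v)) + fderiv ℝ Ψ (η, v) p) :
    fderiv ℝ (fun z : V => h z - J z ξ) (Ψ (η, v)) = 0 ↔
      ((∀ γ ∈ q, J (Ψ (η, v)) ⁅ξ, γ⁆ = 0) ∧
       (∀ β ∈ m, J (Ψ (η, v)) ⁅ξ, β⁆ = 0) ∧
       (∀ δη : M',
         fderiv ℝ (fun p : M' × V₀ => h (Ψ p) - J (Ψ p) ξ) (η, v) (δη, 0) = 0) ∧
       (∀ δv : V₀,
         fderiv ℝ (fun p : M' × V₀ => h (Ψ p) - J (Ψ p) ξ) (η, v) (0, δv) = 0)) := by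
  set z₀ := Ψ (η, v)
  have hh : DifferentiableAt ℝ h z₀ := hhC1.differentiable one_ne_zero z₀
  have hJ : DifferentiableAt ℝ (fun z => J z ξ) z₀ := (hJC1 ξ).differentiable one_ne_zero z₀
  have horbit (ζ : g) : fderiv ℝ (fun z => h z - J z ξ) z₀ (ρ ζ z₀) = -J z₀ ⁅ξ, ζ⁆ :=
    fderiv_sub_momentum_apply_rho ρ J h hh hJ (hhinv z₀ ζ) (hJequiv z₀ ζ ξ)
  have hchain : fderiv ℝ (fun p => h (Ψ p) - J (Ψ p) ξ) (η, v) =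
      (fderiv ℝ (fun z => h z - J z ξ) z₀).comp (fderiv ℝ Ψ (η, v)) :=
    fderiv_fun_comp (η, v) (hh.sub hJ) (hΨdiff (η, v))
  simp only [ContinuousLinearMap.ext_iff, zero_apply]
  rw [forall_map_eq_zero_iff_of_forall_eq_add _ (LinearMap.applyₗ z₀ ∘ₗ ρ.toLinearMap) _ hdecomp,
    hchain, ← forall_prod_map_eq_zero_iff]
  simp only [LinearMap.comp_apply, LinearMap.applyₗ_apply_apply, LieHom.coe_toLinearMap,
    horbit, neg_eq_zero, ContinuousLinearMap.comp_apply]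

/-- Splitting of the relative equilibrium (critical point) equation along a slice
mapping: at a point where `V = (𝔪 ⊕ 𝔮)·Ψ(η,v) + range DΨ(η,v)`, the critical point equation
`D(h − J^ξ)(Ψ(η,v)) = 0` is equivalent to the four conditions (RE1)–(RE4). -/
theorem stmt_2 {V g M' V₀ : Type*}
    [NormedAddCommGroup V] [NormedSpace ℝ V] [FiniteDimensional ℝ V]
    [LieRing g] [LieAlgebra ℝ g] [FiniteDimensional ℝ g]
    [NormedAddCommGroup M'] [NormedSpace ℝ M'] [FiniteDimensional ℝ M']
    [NormedAddCommGroup V₀] [NormedSpace ℝ V₀] [FiniteDimensional ℝ V₀]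
    (ω : V →ₗ[ℝ] V →ₗ[ℝ] ℝ)
    (halt : ∀ v : V, ω v v = 0)
    (hnondeg : ∀ v : V, (∀ u : V, ω v u = 0) → v = 0)
    (ρ : g →ₗ⁅ℝ⁆ Module.End ℝ V)
    (hinfsymp : ∀ (ζ : g) (u w : V), ω (ρ ζ u) w + ω u (ρ ζ w) = 0)
    (J : V → Module.Dual ℝ g)
    (hJC1 : ∀ ξ : g, ContDiff ℝ 1 fun z : V => J z ξ)
    (hJequiv : ∀ (z : V) (ζ ξ : g),
      fderiv ℝ (fun w : V => J w ξ) z (ρ ζ z) = - J z ⁅ζ, ξ⁆)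
    (h : V → ℝ) (hhC1 : ContDiff ℝ 1 h)
    (hhinv : ∀ (z : V) (ζ : g), fderiv ℝ h z (ρ ζ z) = 0)
    (m q : Submodule ℝ g)
    (Ψ : M' × V₀ → V) (hΨdiff : Differentiable ℝ Ψ)
    (ξ : g) (η : M') (v : V₀)
    (hdecomp : ∀ u : V, ∃ ζ ∈ m ⊔ q, ∃ p : M' × V₀,
      u = ρ ζ (Ψ (η, v)) + fderiv ℝ Ψ (η, v) p) :
    fderiv ℝ (fun z : V => h z - J z ξ) (Ψ (η, v)) = 0 ↔
      ((∀ γ ∈ q, J (Ψ (η, v)) ⁅ξ, γ⁆ = 0) ∧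
       (∀ β ∈ m, J (Ψ (η, v)) ⁅ξ, β⁆ = 0) ∧
       (∀ δη : M',
         fderiv ℝ (fun p : M' × V₀ => h (Ψ p) - J (Ψ p) ξ) (η, v) (δη, 0) = 0) ∧
       (∀ δv : V₀,
         fderiv ℝ (fun p : M' × V₀ => h (Ψ p) - J (Ψ p) ξ) (η, v) (0, δv) = 0)) :=
  stmt_2_general ρ J hJC1 hJequiv h hhC1 hhinv m q Ψ hΨdiff ξ η v hdecomp
end

section
/- Let V be a finite-dimensional real vector space, 𝔤 a finite-dimensional real Lie algebra, and ρ : 𝔤 → End(V) a linear map. Let h : V → ℝ be differentiable with Dh(z)·(ρ(ζ)z) = 0 for all z ∈ V and ζ ∈ 𝔤 (infinitesimal invariance), and let J : V → 𝔤* be differentiable with ⟨DJ(z)·(ρ(ζ)z), ξ⟩ = −⟨J(z), [ζ, ξ]⟩ for all z ∈ V and ζ, ξ ∈ 𝔤 (infinitesimal equivariance). If z₀ ∈ V and ξ ∈ 𝔤 satisfy D(h − ⟨J(·), ξ⟩)(z₀) = 0, then ⟨J(z₀), [ξ, ζ]⟩ = 0 for all ζ ∈ 𝔤, i.e. the momentum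 value J(z₀) is infinitesimally fixed by the generator ξ. -/
section AugmentedHamiltonian

variable {V g : Type*} [NormedAddCommGroup V] [NormedSpace ℝ V] [LieRing g] [LieAlgebra ℝ g]

theorem fderiv_augmentedHamiltonian_apply_infinitesimalAction
    {ρ : g →ₗ[ℝ] V →ₗ[ℝ] V} {h : V → ℝ} {J : V → Module.Dual ℝ g} {z : V} {ξ ζ : g}
    (hdiff : DifferentiableAt ℝ h z) (hJdiff : DifferentiableAt ℝ (fun w : V => J w ξ) z)
    (hinv : fderiv ℝ h z (ρ ζ z) = 0)
    (hJequiv : fderiv ℝ (fun w : V => J w ξ) z (ρ ζ z) = - J z ⁅ζ, ξ⁆) :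
    fderiv ℝ (fun w : V => h w - J w ξ) z (ρ ζ z) = J z ⁅ζ, ξ⁆ := by
  rw [fderiv_fun_sub hdiff hJdiff, sub_apply, hinv, hJequiv, zero_sub, neg_neg]

end AugmentedHamiltonian

theorem stmt_6_general {V g : Type*}
    [NormedAddCommGroup V] [NormedSpace ℝ V]
    [LieRing g] [LieAlgebra ℝ g]
    (ρ : g →ₗ[ℝ] V →ₗ[ℝ] V)
    (h : V → ℝ) (hdiff : Differentiable ℝ h)
    (hinv : ∀ (z : V) (ζ : g), fderiv ℝ h z (ρ ζ z) = 0)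
    (J : V → Module.Dual ℝ g)
    (hJdiff : ∀ ξ : g, Differentiable ℝ fun z : V => J z ξ)
    (hJequiv : ∀ (z : V) (ζ ξ : g),
      fderiv ℝ (fun w : V => J w ξ) z (ρ ζ z) = - J z ⁅ζ, ξ⁆)
    (z₀ : V) (ξ : g)
    (hcrit : fderiv ℝ (fun z : V => h z - J z ξ) z₀ = 0) :
    ∀ ζ : g, J z₀ ⁅ξ, ζ⁆ = 0 := by
  intro ζ
  have hζξ : J z₀ ⁅ζ, ξ⁆ = 0 := by
    rw [← fderiv_augmentedHamiltonian_apply_infinitesimalAction (hdiff z₀) (hJdiff ξ z₀)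
      (hinv z₀ ζ) (hJequiv z₀ ζ ξ), hcrit, zero_apply]
  rw [← lie_skew, map_neg, hζξ, neg_zero]

/-- If `z₀` is a critical point of the augmented Hamiltonian `h − ⟨J(·), ξ⟩` of an
infinitesimally invariant Hamiltonian `h` with infinitesimally equivariant momentum map `J`,
then the momentum value `J(z₀)` is infinitesimally fixed by the generator `ξ`. -/
theorem stmt_6 {V g : Type*}
    [NormedAddCommGroup V] [NormedSpace ℝ V] [FiniteDimensional ℝ V]
    [LieRing g] [LieAlgebra ℝ g] [FiniteDimensional ℝ g]
    (ρ : g →ₗ[ℝ] V →ₗ[ℝ] V)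
    (h : V → ℝ) (hdiff : Differentiable ℝ h)
    (hinv : ∀ (z : V) (ζ : g), fderiv ℝ h z (ρ ζ z) = 0)
    (J : V → Module.Dual ℝ g)
    (hJdiff : ∀ ξ : g, Differentiable ℝ fun z : V => J z ξ)
    (hJequiv : ∀ (z : V) (ζ ξ : g),
      fderiv ℝ (fun w : V => J w ξ) z (ρ ζ z) = - J z ⁅ζ, ξ⁆)
    (z₀ : V) (ξ : g)
    (hcrit : fderiv ℝ (fun z : V => h z - J z ξ) z₀ = 0) :
    ∀ ζ : g, J z₀ ⁅ξ, ζ⁆ = 0 :=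
  stmt_6_general ρ h hdiff hinv J hJdiff hJequiv z₀ ξ hcrit
end

section
/- Let V be a finite-dimensional real inner product space, W a finite-dimensional real normed vector space, and f : V × W → ℝ twice continuously differentiable. Let L : V → V be the self-adjoint operator representing the Hessian of f in the V-variable at (0,0), i.e. ⟨L v, w⟩ = D²f(0,0)((v,0),(w,0)) for all v, w ∈ V; set V₀ := ker L and let P : V → V denote the orthogonal projection onto V₀. For α ∈ W let F(v, α) ∈ V denote the gradient of f(·, α) at v. Suppose U is an open neighborhood of (0,0) in V₀ × W and v₁ : U → V₀^⊥ is a differentiable map such that (id − P)(F(v₀ + v₁(v₀, α), α)) = 0 for all (v₀, α) ∈ U. Define g(v₀, α) := f(v₀ + v₁(v₀, α), α) and B(v₀, α) := P(F(v₀ + v₁(v₀, α), α)). Then for every (v₀, α) ∈ U and every w ∈ V₀, ⟨B(v₀, α), w⟩ equals the derivative of g(·, α) at v₀ in the direction w; that is, B is the V₀-gradient of g. -/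
/-!
Write `x + v₁(x, α)` for the point of `V` above `x ∈ V₀`. By the chain rule, the derivative of
`g(·, α)` at `v₀` in the direction `w` is `⟨F, w⟩ + ⟨F, ∂v₁ w⟩` with `F` evaluated at that point.
The reduced equation says `F = P F ∈ V₀`, while `∂v₁ w ∈ V₀ᗮ` because `v₁` takes values in `V₀ᗮ`;
so the second term vanishes and the first is `⟨B(v₀, α), w⟩`.
-/

open scoped InnerProductSpace

section

variable {V : Type*} [NormedAddCommGroup V] [InnerProductSpace ℝ V]

theorem Submodule.apply_mem_of_eq_self_of_eq_zero_on_orthogonal (K : Submodule ℝ V)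
    [K.HasOrthogonalProjection] {P : V →ₗ[ℝ] V} (hP₁ : ∀ v ∈ K, P v = v)
    (hP₂ : ∀ v ∈ Kᗮ, P v = 0) (v : V) : P v ∈ K := by
  obtain ⟨y, hy, z, hz, rfl⟩ := K.exists_add_mem_mem_orthogonal v
  rwa [map_add, hP₁ y hy, hP₂ z hz, add_zero]

theorem Submodule.fderiv_comp_add_orthogonal_apply {K : Submodule ℝ V} {G : V → ℝ}
    {h : K → Kᗮ} {x : K} {g : V} (hg : g ∈ K) (hG : DifferentiableAt ℝ G (x + h x))
    (hgrad : ∀ u, ⟪g, u⟫_ℝ = fderiv ℝ G (x + h x) u) (hh : DifferentiableAt ℝ h x) (w : K) :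
    fderiv ℝ (fun y : K => G (y + h y)) x w = ⟪g, w⟫_ℝ := by
  have hlift : HasFDerivAt (fun y : K => (y : V) + h y)
      (K.subtypeL + Kᗮ.subtypeL.comp (fderiv ℝ h x)) x :=
    K.subtypeL.hasFDerivAt.add (Kᗮ.subtypeL.hasFDerivAt.comp x hh.hasFDerivAt)
  have horth : ⟪g, (fderiv ℝ h x w : V)⟫_ℝ = 0 :=
    (Submodule.mem_orthogonal _ _).mp (fderiv ℝ h x w).2 g hg
  have hchain : HasFDerivAt (fun y : K => G (y + h y))
      ((fderiv ℝ G (x + h x)).comp (K.subtypeL + Kᗮ.subtypeL.comp (fderiv ℝ h x))) x :=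
    hG.hasFDerivAt.comp x hlift
  rw [hchain.fderiv]
  simp only [ContinuousLinearMap.comp_apply, add_apply, Submodule.subtypeL_apply, ← hgrad]
  rw [inner_add_right, horth, add_zero]

end

theorem stmt_7_general {V W : Type*}
    [NormedAddCommGroup V] [InnerProductSpace ℝ V] [FiniteDimensional ℝ V]
    [NormedAddCommGroup W] [NormedSpace ℝ W]
    (f : V × W → ℝ) (hf : ContDiff ℝ 2 f)
    (L : V →ₗ[ℝ] V)
    (P : V →ₗ[ℝ] V)
    (hP₁ : ∀ v ∈ LinearMap.ker L, P v = v)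
    (hP₂ : ∀ v ∈ (LinearMap.ker L)ᗮ, P v = 0)
    (F : V → W → V)
    (hF : ∀ (v : V) (α : W) (u : V),
      (inner ℝ (F v α) u : ℝ) = fderiv ℝ (fun x : V => f (x, α)) v u)
    (U : Set (↥(LinearMap.ker L) × W))
    (v₁ : ↥(LinearMap.ker L) × W → ↥(LinearMap.ker L)ᗮ)
    (hv₁diff : ∀ p ∈ U, DifferentiableAt ℝ v₁ p)
    (hsolve : ∀ p ∈ U,
      F ((p.1 : V) + (v₁ p : V)) p.2 - P (F ((p.1 : V) + (v₁ p : V)) p.2) = 0) :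
    ∀ p ∈ U, ∀ w : ↥(LinearMap.ker L),
      (inner ℝ (P (F ((p.1 : V) + (v₁ p : V)) p.2)) (w : V) : ℝ) =
        fderiv ℝ
          (fun x : ↥(LinearMap.ker L) => f ((x : V) + (v₁ (x, p.2) : V), p.2)) p.1 w := by
  intro p hp w
  have hFP := sub_eq_zero.mp (hsolve p hp)
  have hFK : F ((p.1 : V) + (v₁ p : V)) p.2 ∈ LinearMap.ker L := hFP ▸
    (LinearMap.ker L).apply_mem_of_eq_self_of_eq_zero_on_orthogonal hP₁ hP₂ _
  have hslice : DifferentiableAt ℝ (fun y : V => f (y, p.2)) ((p.1 : V) + (v₁ p : V)) :=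
    ((hf.differentiable (by norm_num)) _).comp _ (differentiableAt_id.prodMk
      (differentiableAt_const _))
  have hv₁slice : DifferentiableAt ℝ (fun x : ↥(LinearMap.ker L) => v₁ (x, p.2)) p.1 :=
    (hv₁diff p hp).comp p.1 (differentiableAt_id.prodMk (differentiableAt_const _))
  rw [← hFP, Submodule.fderiv_comp_add_orthogonal_apply (h := fun x => v₁ (x, p.2)) hFK
    hslice (hF _ p.2) hv₁slice]

/-- After Lyapunov–Schmidt reduction of the gradient equation `F(v, α) = 0`,
the bifurcation map `B(v₀, α) := P F(v₀ + v₁(v₀, α), α)` is the `V₀`-gradient of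
`g(v₀, α) := f(v₀ + v₁(v₀, α), α)`. -/
theorem stmt_7 {V W : Type*}
    [NormedAddCommGroup V] [InnerProductSpace ℝ V] [FiniteDimensional ℝ V]
    [NormedAddCommGroup W] [NormedSpace ℝ W] [FiniteDimensional ℝ W]
    (f : V × W → ℝ) (hf : ContDiff ℝ 2 f)
    (L : V →ₗ[ℝ] V)
    (hL : ∀ v w : V,
      (inner ℝ (L v) w : ℝ) = fderiv ℝ (fderiv ℝ f) (0, 0) (v, 0) (w, 0))
    (hLsa : ∀ v w : V, (inner ℝ (L v) w : ℝ) = (inner ℝ v (L w) : ℝ))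
    (P : V →ₗ[ℝ] V)
    (hP₁ : ∀ v ∈ LinearMap.ker L, P v = v)
    (hP₂ : ∀ v ∈ (LinearMap.ker L)ᗮ, P v = 0)
    (F : V → W → V)
    (hF : ∀ (v : V) (α : W) (u : V),
      (inner ℝ (F v α) u : ℝ) = fderiv ℝ (fun x : V => f (x, α)) v u)
    (U : Set (↥(LinearMap.ker L) × W)) (hUopen : IsOpen U) (hU0 : (0, 0) ∈ U)
    (v₁ : ↥(LinearMap.ker L) × W → ↥(LinearMap.ker L)ᗮ)
    (hv₁diff : ∀ p ∈ U, DifferentiableAt ℝ v₁ p)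
    (hsolve : ∀ p ∈ U,
      F ((p.1 : V) + (v₁ p : V)) p.2 - P (F ((p.1 : V) + (v₁ p : V)) p.2) = 0) :
    ∀ p ∈ U, ∀ w : ↥(LinearMap.ker L),
      (inner ℝ (P (F ((p.1 : V) + (v₁ p : V)) p.2)) (w : V) : ℝ) =
        fderiv ℝ
          (fun x : ↥(LinearMap.ker L) => f ((x : V) + (v₁ (x, p.2) : V), p.2)) p.1 w :=
  stmt_7_general f hf L P hP₁ hP₂ F hF U v₁ hv₁diff hsolve
end

section
/- Let E, F, Z be real Banach spaces, G a group, and ρ : G → (E ≃L E), σ : G → (F ≃L F), τ : G → (Z ≃L Z) group homomorphisms into the continuous linear automorphisms. Let f : E × F → Z satisfy the equivariance condition f(ρ(g)x, σ(g)y) = τ(g)(f(x, y)) for all g ∈ G, x ∈ E, y ∈ F. Suppose (x₀, y₀) is a common fixed point (ρ(g)x₀ = x₀ and σ(g)y₀ = y₀ for all g ∈ G), f(x₀, y₀) = 0, f is strictly differentiable at (x₀, y₀), and the partial derivative of f with respect to the F-variable at (x₀, y₀) is a continuous linear isomorphism from F onto Z. If φ : E → F is continuous at x₀ with φ(x₀)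 = y₀ and f(x, φ(x)) = 0 for all x in some neighborhood of x₀, then for every g ∈ G there is a neighborhood of x₀ on which φ(ρ(g)x) = σ(g)(φ(x)). -/
/-! If `φ` solves `f (x, φ x) = 0` near `x₀`, then so does `x ↦ σ g (φ (ρ g⁻¹ x))`, by equivariance;
it is continuous at `x₀` with value `y₀` there because `(x₀, y₀)` is fixed. The uniqueness part of
the implicit function theorem (invertibility of the partial derivative in `y`) then forces the two
solutions to agree near `x₀`. -/

open Filter Topology

namespace HasStrictFDerivAt

variable {𝕜 : Type*} [NontriviallyNormedField 𝕜]
  {E : Type*} [NormedAddCommGroup E] [NormedSpace 𝕜 E] [CompleteSpace E]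
  {F : Type*} [NormedAddCommGroup F] [NormedSpace 𝕜 F] [CompleteSpace F]
  {Z : Type*} [NormedAddCommGroup Z] [NormedSpace 𝕜 Z] [CompleteSpace Z]
  {f : E × F → Z} {Df : E × F →L[𝕜] Z} {u : E × F}

theorem eventuallyEq_of_tendsto_of_eventually_apply_eq
    (hf : HasStrictFDerivAt f Df u) (hinv : (Df ∘L .inr 𝕜 E F).IsInvertible) {φ ψ : E → F}
    (hφ : Tendsto φ (𝓝 u.1) (𝓝 u.2)) (hψ : Tendsto ψ (𝓝 u.1) (𝓝 u.2))
    (hφsol : ∀ᶠ x in 𝓝 u.1, f (x, φ x) = f u) (hψsol : ∀ᶠ x in 𝓝 u.1, f (x, ψ x) = f u) :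
    φ =ᶠ[𝓝 u.1] ψ := by
  have hgraph {χ : E → F} (hχ : Tendsto χ (𝓝 u.1) (𝓝 u.2)) :
      Tendsto (fun x ↦ (x, χ x)) (𝓝 u.1) (𝓝 u) :=
    tendsto_id.prodMk_nhds hχ
  have hiff := hf.eventually_apply_eq_iff_implicitFunctionOfProdDomain hinv
  filter_upwards [(hgraph hφ).eventually hiff, (hgraph hψ).eventually hiff, hφsol, hψsol]
    with x hφx hψx hφx' hψx'
  exact (hφx.mp hφx').symm.trans (hψx.mp hψx')

theorem eventually_apply_homeomorph_eq_of_zero_set_invariant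
    (hf : HasStrictFDerivAt f Df u) (hinv : (Df ∘L .inr 𝕜 E F).IsInvertible) (hu : f u = 0)
    (A : E ≃ₜ E) (hA : A u.1 = u.1) {B : F → F} (hB : ContinuousAt B u.2) (hBu : B u.2 = u.2)
    (hAB : ∀ x y, f (x, y) = 0 → f (A x, B y) = 0)
    {φ : E → F} (hφ : Tendsto φ (𝓝 u.1) (𝓝 u.2)) (hφsol : ∀ᶠ x in 𝓝 u.1, f (x, φ x) = 0) :
    ∀ᶠ x in 𝓝 u.1, φ (A x) = B (φ x) := by
  have hA_tendsto : Tendsto A (𝓝 u.1) (𝓝 u.1) := by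
    simpa only [hA] using A.continuous.tendsto u.1
  have hAsymm_tendsto : Tendsto A.symm (𝓝 u.1) (𝓝 u.1) := by
    simpa only [A.symm_apply_eq.mpr hA.symm] using A.symm.continuous.tendsto u.1
  have hψ : Tendsto (fun x ↦ B (φ (A.symm x))) (𝓝 u.1) (𝓝 u.2) :=
    (hBu ▸ hB.tendsto).comp (hφ.comp hAsymm_tendsto)
  have hψsol : ∀ᶠ x in 𝓝 u.1, f (x, B (φ (A.symm x))) = f u := by
    filter_upwards [hAsymm_tendsto.eventually hφsol] with x hx
    simpa [hu] using hAB _ _ hx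
  have hφψ := hf.eventuallyEq_of_tendsto_of_eventually_apply_eq hinv hφ hψ
    (hφsol.mono fun _ hx ↦ hx.trans hu.symm) hψsol
  filter_upwards [hA_tendsto.eventually hφψ] with x hx
  simpa using hx

end HasStrictFDerivAt

/-- An implicitly defined function obtained from an equivariant equation at a
symmetric point is equivariant: if `f` is `G`-equivariant, `(x₀, y₀)` is a common fixed point,
`f(x₀,y₀) = 0`, `f` is strictly differentiable there with invertible partial derivative in the
second variable, and `φ` solves `f(x, φ(x)) = 0` near `x₀` continuously with `φ(x₀) = y₀`, then
`φ(ρ(g)x) = σ(g)(φ(x))` near `x₀` for every `g`. -/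
theorem stmt_8 {E F Z : Type*}
    [NormedAddCommGroup E] [NormedSpace ℝ E] [CompleteSpace E]
    [NormedAddCommGroup F] [NormedSpace ℝ F] [CompleteSpace F]
    [NormedAddCommGroup Z] [NormedSpace ℝ Z] [CompleteSpace Z]
    {G : Type*} [Group G]
    (ρ : G →* E ≃L[ℝ] E) (σ : G →* F ≃L[ℝ] F) (τ : G →* Z ≃L[ℝ] Z)
    (f : E × F → Z)
    (hequiv : ∀ (g : G) (x : E) (y : F), f (ρ g x, σ g y) = τ g (f (x, y)))
    (x₀ : E) (y₀ : F)
    (hfix : ∀ g : G, ρ g x₀ = x₀ ∧ σ g y₀ = y₀)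
    (hzero : f (x₀, y₀) = 0)
    (Df : E × F →L[ℝ] Z)
    (hstrict : HasStrictFDerivAt f Df (x₀, y₀))
    (e : F ≃L[ℝ] Z) (he : ∀ y : F, e y = Df (0, y))
    (φ : E → F) (hφcont : ContinuousAt φ x₀) (hφ0 : φ x₀ = y₀)
    (hφsol : ∀ᶠ x in nhds x₀, f (x, φ x) = 0) :
    ∀ g : G, ∀ᶠ x in nhds x₀, φ (ρ g x) = σ g (φ x) := by
  intro g
  have hinv : (Df ∘L .inr ℝ E F).IsInvertible := ⟨e, by ext y; exact he y⟩
  exact hstrict.eventually_apply_homeomorph_eq_of_zero_set_invariant hinv hzero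
    (ρ g).toHomeomorph (hfix g).1 (σ g).continuous.continuousAt (hfix g).2
    (fun x y hxy ↦ by simp [hequiv, hxy]) (hφ0 ▸ hφcont.tendsto) hφsol
end

section
/- Let (V, ω) be a finite-dimensional real symplectic vector space and A : V → V an infinitesimally symplectic linear map. Define J_A : V → ℝ by J_A(z) := ½ ω(A z, z). Let h : V → ℝ be continuously differentiable with h(exp(tA) z) = h(z) for all t ∈ ℝ and z ∈ V, and let X_h : V → V be the Hamiltonian vector field of h, defined by ω(X_h(z), u) = Dh(z)·u for all u. If z₀ ∈ V satisfies D(h − J_A)(z₀) = 0, then the curve γ(t) := exp(tA) z₀ is an integral curve of X_h: γ′(t) = X_h(γ(t)) for all t ∈ ℝ. -/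
/-!
The flow `exp (t • A)` preserves `ω` and commutes with `A`, so it preserves `J_A` and hence the
augmented Hamiltonian `h - J_A`; a flow-invariant function has flow-invariant critical points, so
every `γ t` is a critical point of `h - J_A`. At a critical point `z`, `dh z = dJ_A z = ω (A z) ·`,
and nondegeneracy of `ω` turns this into `X_h z = A z`, which is exactly `γ' t`.
-/

open NormedSpace

section Flow

variable {𝕂 E : Type*} [RCLike 𝕂] [NormedAddCommGroup E] [NormedSpace 𝕂 E]

theorem commute_exp_smul_self (A : E →L[𝕂] E) (t : 𝕂) : Commute (exp (t • A)) A :=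
  ((Commute.refl A).smul_left t).exp_left

variable [CompleteSpace E]

theorem hasDerivAt_exp_smul_apply (A : E →L[𝕂] E) (z : E) (t : 𝕂) :
    HasDerivAt (fun s : 𝕂 => exp (s • A) z) (A (exp (t • A) z)) t := by
  simpa using (hasDerivAt_exp_smul_const' A t).clm_apply (hasDerivAt_const t z)

theorem isUnit_exp_clm (A : E →L[𝕂] E) : IsUnit (exp A) :=
  isUnit_exp_of_mem_ball (𝕂 := 𝕂) <|
    (expSeries_radius_eq_top 𝕂 (E →L[𝕂] E)).symm ▸ edist_lt_top _ _

end Flow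

section Invariance

variable {𝕜 E F : Type*} [NontriviallyNormedField 𝕜] [NormedAddCommGroup E] [NormedSpace 𝕜 E]
  [NormedAddCommGroup F] [NormedSpace 𝕜 F]

theorem fderiv_apply_eq_zero_of_comp_equiv {g : E → F} (L : E ≃L[𝕜] E) (hg : g ∘ L = g) {z : E}
    (hz : fderiv 𝕜 g z = 0) : fderiv 𝕜 g (L z) = 0 := by
  have hcomp := L.comp_right_fderiv (f := g) (x := z)
  rw [hg, hz] at hcomp
  ext w
  simpa using congrArg (fun φ : E →L[𝕜] F => φ (L.symm w)) hcomp.symm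

end Invariance

section BilinearForm

variable {E : Type*} [NormedAddCommGroup E] [NormedSpace ℝ E]

theorem bilin_exp_smul_apply_exp_smul_apply [CompleteSpace E] (ω : E →L[ℝ] E →L[ℝ] ℝ)
    {A : E →L[ℝ] E} (hA : ∀ u v, ω (A u) v + ω u (A v) = 0) (t : ℝ) (u v : E) :
    ω (exp (t • A) u) (exp (t • A) v) = ω u v := by
  let f : ℝ → ℝ := fun s => ω (exp (s • A) u) (exp (s • A) v)
  have hf : ∀ s, HasDerivAt f 0 s := fun s => by
    have := (ω.hasFDerivAt.comp_hasDerivAt s (hasDerivAt_exp_smul_apply A u s)).clm_apply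
      (hasDerivAt_exp_smul_apply A v s)
    simpa only [Function.comp_apply, hA] using this
  have := is_const_of_deriv_eq_zero (fun s => (hf s).differentiableAt) (fun s => (hf s).deriv) t 0
  simpa [f] using this

theorem bilin_apply_eq_neg_swap_of_alt {ω : E →L[ℝ] E →L[ℝ] ℝ} (halt : ∀ v, ω v v = 0) (u v : E) :
    ω u v = -ω v u := by
  have := halt (u + v)
  simp only [map_add, add_apply, halt] at this
  linarith

theorem hasFDerivAt_half_bilin_apply_self {ω : E →L[ℝ] E →L[ℝ] ℝ} (halt : ∀ v, ω v v = 0)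
    {A : E →L[ℝ] E} (hA : ∀ u v, ω (A u) v + ω u (A v) = 0) (z : E) :
    HasFDerivAt (fun z => (1 / 2 : ℝ) * ω (A z) z) (ω (A z)) z := by
  refine (((ω.comp A).hasFDerivAt.clm_apply (hasFDerivAt_id z)).const_mul
    (1 / 2 : ℝ)).congr_fderiv ?_
  ext u
  have hsymm : ω (A u) z = ω (A z) u := by
    linarith [hA u z, bilin_apply_eq_neg_swap_of_alt halt u (A z)]
  simp [hsymm]
  ring

theorem half_bilin_apply_self_exp_smul [CompleteSpace E] (ω : E →L[ℝ] E →L[ℝ] ℝ) {A : E →L[ℝ] E}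
    (hA : ∀ u v, ω (A u) v + ω u (A v) = 0) (t : ℝ) (z : E) :
    (1 / 2 : ℝ) * ω (A (exp (t • A) z)) (exp (t • A) z) = (1 / 2 : ℝ) * ω (A z) z := by
  rw [← mul_apply_eq_comp, ← (commute_exp_smul_self A t).eq,
    mul_apply_eq_comp, bilin_exp_smul_apply_exp_smul_apply ω hA]

theorem eq_of_bilin_apply_eq {ω : E →L[ℝ] E →L[ℝ] ℝ} (hnondeg : ∀ v, (∀ u, ω v u = 0) → v = 0)
    {x y : E} (h : ∀ u, ω x u = ω y u) : x = y :=
  sub_eq_zero.mp <| hnondeg _ fun u => by simp [h]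

end BilinearForm

/-- If `z₀` is a critical point of the augmented Hamiltonian `h − J_A`, where
`J_A(z) = ½ ω(Az, z)` and `h` is invariant under the flow `exp(tA)` of the infinitesimally
symplectic operator `A`, then `t ↦ exp(tA) z₀` is an integral curve of the Hamiltonian vector
field `X_h`. -/
theorem stmt_11 {V : Type*}
    [NormedAddCommGroup V] [NormedSpace ℝ V] [FiniteDimensional ℝ V]
    (ω : V →ₗ[ℝ] V →ₗ[ℝ] ℝ)
    (halt : ∀ v : V, ω v v = 0)
    (hnondeg : ∀ v : V, (∀ u : V, ω v u = 0) → v = 0)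
    (A : V →L[ℝ] V)
    (hA : ∀ u v : V, ω (A u) v + ω u (A v) = 0)
    (h : V → ℝ) (hC1 : ContDiff ℝ 1 h)
    (hinv : ∀ (t : ℝ) (z : V), h (NormedSpace.exp (t • A) z) = h z)
    (Xh : V → V) (hXh : ∀ z u : V, ω (Xh z) u = fderiv ℝ h z u)
    (z₀ : V)
    (hcrit : fderiv ℝ (fun z : V => h z - (1 / 2 : ℝ) * ω (A z) z) z₀ = 0) :
    ∀ t : ℝ, HasDerivAt (fun s : ℝ => NormedSpace.exp (s • A) z₀)
      (Xh (NormedSpace.exp (t • A) z₀)) t := by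
  intro t
  let Ω : V →L[ℝ] V →L[ℝ] ℝ :=
    LinearMap.toContinuousLinearMap (LinearMap.toContinuousLinearMap.toLinearMap ∘ₗ ω)
  let L : V ≃L[ℝ] V := .ofUnit (isUnit_exp_clm (t • A)).unit
  have hJ := hasFDerivAt_half_bilin_apply_self (ω := Ω) halt hA (L z₀)
  have hcrit_t : fderiv ℝ (fun z : V => h z - (1 / 2 : ℝ) * Ω (A z) z) (L z₀) = 0 :=
    fderiv_apply_eq_zero_of_comp_equiv L (funext fun z =>
      congrArg₂ (· - ·) (hinv t z) (half_bilin_apply_self_exp_smul Ω hA t z)) hcrit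
  have hdh : fderiv ℝ h (L z₀) = Ω (A (L z₀)) := by
    rw [fderiv_fun_sub ((hC1.differentiable one_ne_zero) _) hJ.differentiableAt, hJ.fderiv,
      sub_eq_zero] at hcrit_t
    exact hcrit_t
  have hXh_t : Xh (L z₀) = A (L z₀) :=
    eq_of_bilin_apply_eq (ω := Ω) hnondeg fun u => (hXh _ u).trans (by rw [hdh])
  exact hXh_t ▸ hasDerivAt_exp_smul_apply A z₀ t
end

section
/- Let h : ℝ⁶ → ℝ be continuously differentiable and define H : ℂ⁴ → ℝ by H(z) := h(|z₁|², |z₂|², |z₃|², |z₄|², Re(z₁² conj(z₃)), Re(z₂² conj(z₄))), and J^ξ(z) := ξ₁(|z₁|² + 2|z₃|²) + ξ₂(|z₂|² + 2|z₄|²) for ξ = (ξ₁, ξ₂) ∈ ℝ². Then for every w ∈ ℂ and every ξ₂ ∈ ℝ, setting ξ₁ := ½ ∂₃h(0, 0, |w|², 0, 0, 0), the point (0, 0, w, 0) is a critical point of H − J^{(ξ₁, ξ₂)}: the Fréchet derivative D(H − J^{(ξ₁, ξ₂)})(0, 0, w, 0) is zero. In particular every element of the fixed-point subspace {(0, 0,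 w, 0) : w ∈ ℂ} is a relative equilibrium with generator (ξ₁, ξ₂). -/
/-!
At `p = (0, 0, w, 0)` every invariant other than `X₃ = |z₃|²` is a product of two factors that
vanish at `p`, so its derivative there is zero. By the chain rule `DH(p) = ∂₃h · DX₃(p)`, while
`DJ^ξ(p) = 2ξ₁ · DX₃(p)` since `DX₁(p) = DX₂(p) = DX₄(p) = 0`; the choice `ξ₁ = ½ ∂₃h` makes the
two cancel.
-/
open Complex ContinuousLinearMap

section
variable {E : Type*} [NormedAddCommGroup E] [NormedSpace ℝ E] {x : E}

theorem hasFDerivAt_mul_zero_of_eq_zero {𝔸 : Type*} [NormedCommRing 𝔸] [NormedAlgebra ℝ 𝔸]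
    {f g : E → 𝔸} (hf : DifferentiableAt ℝ f x) (hg : DifferentiableAt ℝ g x)
    (hfx : f x = 0) (hgx : g x = 0) : HasFDerivAt (fun y => f y * g y) (0 : E →L[ℝ] 𝔸) x :=
  (hf.hasFDerivAt.mul hg.hasFDerivAt).congr_fderiv (by ext; simp [hfx, hgx])

namespace Complex

theorem hasFDerivAt_re_mul_zero_of_eq_zero {f g : E → ℂ}
    (hf : DifferentiableAt ℝ f x) (hg : DifferentiableAt ℝ g x)
    (hfx : f x = 0) (hgx : g x = 0) :
    HasFDerivAt (fun y => (f y * g y).re) (0 : E →L[ℝ] ℝ) x :=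
  (reCLM.hasFDerivAt.comp x (hasFDerivAt_mul_zero_of_eq_zero hf hg hfx hgx)).congr_fderiv
    (by simp)

theorem hasFDerivAt_normSq_zero_of_eq_zero {f : E → ℂ} (hf : DifferentiableAt ℝ f x)
    (hfx : f x = 0) : HasFDerivAt (fun y => normSq (f y)) (0 : E →L[ℝ] ℝ) x := by
  simpa [mul_conj] using hasFDerivAt_re_mul_zero_of_eq_zero hf hf.star hfx (by simp [hfx])

theorem hasFDerivAt_re_sq_mul_conj_zero_of_eq_zero {f g : E → ℂ}
    (hf : DifferentiableAt ℝ f x) (hg : DifferentiableAt ℝ g x) (hfx : f x = 0) :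
    HasFDerivAt (fun y => (f y ^ 2 * starRingEnd ℂ (g y)).re) (0 : E →L[ℝ] ℝ) x := by
  simpa [pow_two, mul_assoc] using
    hasFDerivAt_re_mul_zero_of_eq_zero hf (hf.mul hg.star) hfx (by simp [hfx])

theorem differentiableAt_normSq_comp {f : E → ℂ} (hf : DifferentiableAt ℝ f x) :
    DifferentiableAt ℝ (fun y => normSq (f y)) x := by
  have := reCLM.differentiableAt.comp x (hf.mul hf.star)
  simpa [Function.comp_def, mul_conj] using this

end Complex

theorem hasFDerivAt_pi_of_hasFDerivAt_zero_of_ne {ι : Type*} [Fintype ι] [DecidableEq ι]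
    {Φ : E → ι → ℝ} {k : ι} {L : E →L[ℝ] ℝ} (hk : HasFDerivAt (fun y => Φ y k) L x)
    (h0 : ∀ i ≠ k, HasFDerivAt (fun y => Φ y i) (0 : E →L[ℝ] ℝ) x) :
    HasFDerivAt Φ (L.smulRight (Pi.single k 1)) x := by
  refine hasFDerivAt_pi'' fun i => ?_
  by_cases hi : i = k
  · subst hi
    exact hk.congr_fderiv (by ext; simp)
  · exact (h0 i hi).congr_fderiv (by ext; simp [hi])
end

-- `(X₁, X₂, X₃, X₄, U₁, U₂)`, so that `H = h ∘ invariantMap`.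
def invariantMap (z : Fin 4 → ℂ) : Fin 6 → ℝ :=
  ![normSq (z 0), normSq (z 1), normSq (z 2), normSq (z 3),
    (z 0 ^ 2 * starRingEnd ℂ (z 2)).re, (z 1 ^ 2 * starRingEnd ℂ (z 3)).re]

theorem invariantMap_fixedSubspace (w : ℂ) :
    invariantMap ![0, 0, w, 0] = ![0, 0, normSq w, 0, 0, 0] := by
  ext i; fin_cases i <;> simp [invariantMap]

theorem hasFDerivAt_invariantMap_of_eq_zero {p : Fin 4 → ℂ} (h0 : p 0 = 0) (h1 : p 1 = 0)
    (h3 : p 3 = 0) :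
    HasFDerivAt invariantMap
      ((fderiv ℝ (fun z : Fin 4 → ℂ => normSq (z 2)) p).smulRight (Pi.single 2 1)) p := by
  have hd (i : Fin 4) : DifferentiableAt ℝ (fun z : Fin 4 → ℂ => z i) p :=
    differentiableAt_apply i p
  refine hasFDerivAt_pi_of_hasFDerivAt_zero_of_ne
    (differentiableAt_normSq_comp (hd 2)).hasFDerivAt fun i hi => ?_
  fin_cases i
  · exact hasFDerivAt_normSq_zero_of_eq_zero (hd 0) h0
  · exact hasFDerivAt_normSq_zero_of_eq_zero (hd 1) h1
  · exact absurd rfl hi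
  · exact hasFDerivAt_normSq_zero_of_eq_zero (hd 3) h3
  · exact hasFDerivAt_re_sq_mul_conj_zero_of_eq_zero (hd 0) (hd 2) h0
  · exact hasFDerivAt_re_sq_mul_conj_zero_of_eq_zero (hd 1) (hd 3) h1

/-- Every point `(0, 0, w, 0)` of `ℂ⁴` is a critical point of the augmented
Hamiltonian `H − J^{(ξ₁, ξ₂)}` with `ξ₁ = ½ ∂₃h(0,0,|w|²,0,0,0)` and arbitrary `ξ₂`; i.e. each
element of the fixed-point subspace is a relative equilibrium with generator `(ξ₁, ξ₂)`. -/
theorem stmt_15 (h : (Fin 6 → ℝ) → ℝ) (hC1 : ContDiff ℝ 1 h) :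
    ∀ (w : ℂ) (ξ₂ : ℝ),
      fderiv ℝ (fun z : Fin 4 → ℂ =>
          h ![Complex.normSq (z 0), Complex.normSq (z 1), Complex.normSq (z 2),
              Complex.normSq (z 3), ((z 0) ^ 2 * (starRingEnd ℂ) (z 2)).re,
              ((z 1) ^ 2 * (starRingEnd ℂ) (z 3)).re] -
          (((1 / 2 : ℝ) *
              fderiv ℝ h ![0, 0, Complex.normSq w, 0, 0, 0] (Pi.single (2 : Fin 6) (1 : ℝ))) *
              (Complex.normSq (z 0) + 2 * Complex.normSq (z 2)) +
           ξ₂ * (Complex.normSq (z 1) + 2 * Complex.normSq (z 3))))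
        ![0, 0, w, 0] = 0 := by
  intro w ξ₂
  have hd (i : Fin 4) : DifferentiableAt ℝ (fun z : Fin 4 → ℂ => z i) ![0, 0, w, 0] :=
    differentiableAt_apply i _
  have hX₁ := hasFDerivAt_normSq_zero_of_eq_zero (hd 0) rfl
  have hX₂ := hasFDerivAt_normSq_zero_of_eq_zero (hd 1) rfl
  have hX₃ := (differentiableAt_normSq_comp (hd 2)).hasFDerivAt
  have hX₄ := hasFDerivAt_normSq_zero_of_eq_zero (hd 3) rfl
  have hdh :
      HasFDerivAt h (fderiv ℝ h ![0, 0, normSq w, 0, 0, 0]) (invariantMap ![0, 0, w, 0]) := by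
    rw [invariantMap_fixedSubspace]
    exact (hC1.differentiable one_ne_zero _).hasFDerivAt
  have hH := hdh.comp _ (hasFDerivAt_invariantMap_of_eq_zero rfl rfl rfl)
  have hJ := ((hX₁.add (hX₃.const_mul 2)).const_mul
      ((1 / 2 : ℝ) * fderiv ℝ h ![0, 0, normSq w, 0, 0, 0] (Pi.single 2 1))).add
    ((hX₂.add (hX₄.const_mul 2)).const_mul ξ₂)
  refine (hH.sub hJ).fderiv.trans ?_
  ext v
  simp only [one_div, zero_add, smul_zero, add_zero, sub_apply, comp_apply, smulRight_apply,
    map_smul, smul_eq_mul, smul_apply, zero_apply]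
  ring
end

section
/- Let h : ℝ⁶ → ℝ be twice continuously differentiable, define H : ℂ⁴ → ℝ by H(z) := h(|z₁|², |z₂|², |z₃|², |z₄|², Re(z₁² conj(z₃)), Re(z₂² conj(z₄))), fix C ∈ ℝ and ξ₂ ∈ ℝ, set a_j := ∂_j h(0, 0, C², 0, 0, 0) for j = 1, 3 and b₁ := ∂₅h(0, 0, C², 0, 0, 0), let ξ := (a₃/2, ξ₂) and J^ξ(z) := (a₃/2)(|z₁|² + 2|z₃|²) + ξ₂(|z₂|² + 2|z₄|²). Then the second Fréchet derivative of H − J^ξ at z_e := (0, 0, C, 0) satisfies, for all x, y ∈ ℝ, D²(H − J^ξ)(z_e)[(x + i y, 0, 0, 0), (x + i y, 0, 0, 0)] = 2(a₁ − a₃/2 + C b₁) x² + 2(a₁ − a₃/2 − C b₁) y². In particular the eigenvalues of the Hessian restricted to the z₁-plane are λ₁⁺ = a₁ − a₃/2 + C b₁ (eigenvector (1,0,0,0)) and λ₁⁻ = a₁ − a₃/2 − C b₁ (eigenvector (i,0,0,0)), up to the overall factor 2. -/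
/-!
Along the line `z_e + t • (u, 0, 0, 0)` the invariants move as `c + t² • w`, with
`c = (0, 0, C², 0, 0, 0)` and `w = (|u|², 0, 0, 0, C Re(u²), 0)`. Since `J^ξ` is linear in the
invariants, the restriction of `H - J^ξ` to that line is `φ (t²)` with `φ s = (h - J^ξ) (c + s • w)`,
and the second derivative of `t ↦ φ (t²)` at `0` is `2 φ'(0) = 2 D(h - J^ξ)(c) w`: only first
derivatives of `h` survive. Taking `u = x + iy` gives `|u|² = x² + y²` and `Re(u²) = x² - y²`.
-/

open Complex

theorem fderiv_fderiv_apply_self_eq_deriv_deriv {E F : Type*} [NormedAddCommGroup E]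
    [NormedSpace ℝ E] [NormedAddCommGroup F] [NormedSpace ℝ F] {f : E → F}
    (hf : ContDiff ℝ 2 f) (c v : E) :
    fderiv ℝ (fderiv ℝ f) c v v = deriv (deriv fun t : ℝ => f (c + t • v)) 0 := by
  have hline : (fun t : ℝ => f (c + t • v)) =
      (fun z => f (c + z)) ∘ ContinuousLinearMap.toSpanSingleton ℝ v := by
    ext t; simp
  have hshift : ContDiff ℝ 2 fun z => f (c + z) := hf.comp (contDiff_const.add contDiff_id)
  rw [← iteratedDeriv_one (f := fun t : ℝ => f (c + t • v)), ← iteratedDeriv_succ,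
    iteratedDeriv_eq_iteratedFDeriv, hline,
    ContinuousLinearMap.iteratedFDeriv_comp_right _ hshift _ le_rfl,
    ContinuousMultilinearMap.compContinuousLinearMap_apply, iteratedFDeriv_comp_add_left,
    iteratedFDeriv_two_apply]
  simp

theorem deriv_deriv_comp_sq_zero {φ : ℝ → ℝ} (hφ : Differentiable ℝ φ)
    (hφ' : DifferentiableAt ℝ (deriv φ) 0) :
    deriv (deriv fun t => φ (t ^ 2)) 0 = 2 * deriv φ 0 := by
  have hchain : deriv (fun t => φ (t ^ 2)) = fun t => deriv φ (t ^ 2) * (2 * t) := by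
    ext t
    exact ((hφ (t ^ 2)).hasDerivAt.comp t (hasDerivAt_pow 2 t)).deriv.trans (by simp)
  have hφ'sq : HasDerivAt (fun t : ℝ => deriv φ (t ^ 2)) 0 0 := by
    have hφ'₀ : HasDerivAt (deriv φ) (deriv (deriv φ) 0) ((0 : ℝ) ^ 2) := by
      simpa using hφ'.hasDerivAt
    simpa [Function.comp_def] using hφ'₀.comp (h := fun t : ℝ => t ^ 2) 0 (hasDerivAt_pow 2 0)
  have hprod : HasDerivAt (fun t => deriv φ (t ^ 2) * (2 * t))
      (0 * (2 * 0) + deriv φ (0 ^ 2) * (2 * 1)) 0 :=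
    hφ'sq.mul ((hasDerivAt_id' 0).const_mul 2)
  rw [hchain, hprod.deriv]
  simp [mul_comm]

def invariants (z : Fin 4 → ℂ) : Fin 6 → ℝ :=
  ![normSq (z 0), normSq (z 1), normSq (z 2), normSq (z 3),
    ((z 0) ^ 2 * (starRingEnd ℂ) (z 2)).re, ((z 1) ^ 2 * (starRingEnd ℂ) (z 3)).re]

/-- `J^ξ` as a function of the invariants: `J^ξ = momentPairing ξ₁ ξ₂ ∘ invariants`. -/
def momentPairing (ξ₁ ξ₂ : ℝ) : (Fin 6 → ℝ) →L[ℝ] ℝ :=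
  ξ₁ • (.proj 0 + (2 : ℝ) • .proj 2) + ξ₂ • (.proj 1 + (2 : ℝ) • .proj 3)

theorem contDiff_invariants {n : WithTop ℕ∞} : ContDiff ℝ n invariants := by
  have hcoord (j : Fin 4) : ContDiff ℝ n fun z : Fin 4 → ℂ => z j := contDiff_apply ℝ ℂ j
  have hnormSq (j : Fin 4) : ContDiff ℝ n fun z : Fin 4 → ℂ => normSq (z j) := by
    simpa only [normSq_eq_norm_sq] using (hcoord j).norm_sq ℝ
  have hre (j k : Fin 4) :
      ContDiff ℝ n fun z : Fin 4 → ℂ => ((z j) ^ 2 * (starRingEnd ℂ) (z k)).re :=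
    reCLM.contDiff.comp (((hcoord j).pow 2).mul (conjCLE.contDiff.comp (hcoord k)))
  refine contDiff_pi.2 fun i => ?_
  fin_cases i
  exacts [hnormSq 0, hnormSq 1, hnormSq 2, hnormSq 3, hre 0 2, hre 1 3]

theorem invariants_line (C : ℝ) (u : ℂ) (t : ℝ) :
    invariants (![0, 0, (C : ℂ), 0] + t • ![u, 0, 0, 0]) =
      ![0, 0, C ^ 2, 0, 0, 0] + t ^ 2 • ![normSq u, 0, 0, 0, C * (u ^ 2).re, 0] := by
  funext i
  fin_cases i <;> simp [invariants, normSq_apply, pow_two] <;> ring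

theorem fderiv_fderiv_comp_invariants_apply {g : (Fin 6 → ℝ) → ℝ} (hg : ContDiff ℝ 2 g)
    (C : ℝ) (u : ℂ) :
    fderiv ℝ (fderiv ℝ (g ∘ invariants)) ![0, 0, (C : ℂ), 0] ![u, 0, 0, 0] ![u, 0, 0, 0] =
      2 * fderiv ℝ g ![0, 0, C ^ 2, 0, 0, 0] ![normSq u, 0, 0, 0, C * (u ^ 2).re, 0] := by
  set c : Fin 6 → ℝ := ![0, 0, C ^ 2, 0, 0, 0]
  set w : Fin 6 → ℝ := ![normSq u, 0, 0, 0, C * (u ^ 2).re, 0]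
  have hφ : ContDiff ℝ 2 fun s : ℝ => g (c + s • w) :=
    hg.comp (contDiff_const.add (contDiff_id.smul contDiff_const))
  have hφ' : ContDiff ℝ 1 (deriv fun s : ℝ => g (c + s • w)) :=
    (contDiff_succ_iff_deriv.1 hφ).2.2
  rw [fderiv_fderiv_apply_self_eq_deriv_deriv (hg.comp contDiff_invariants)]
  simp only [Function.comp_apply, invariants_line]
  rw [deriv_deriv_comp_sq_zero (hφ.differentiable two_ne_zero)
      ((hφ'.differentiable one_ne_zero) 0),
    ← lineDeriv, (hg.differentiable two_ne_zero c).lineDeriv_eq_fderiv]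

theorem stmt_17_general (h : (Fin 6 → ℝ) → ℝ) (hC2 : ContDiff ℝ 2 h) (C ξ₂ : ℝ)
    (a₁ a₃ b₁ : ℝ)
    (ha₁ : a₁ = fderiv ℝ h ![0, 0, C ^ 2, 0, 0, 0] (Pi.single (0 : Fin 6) (1 : ℝ)))
    (hb₁ : b₁ = fderiv ℝ h ![0, 0, C ^ 2, 0, 0, 0] (Pi.single (4 : Fin 6) (1 : ℝ))) :
    ∀ x y : ℝ,
      fderiv ℝ (fderiv ℝ (fun z : Fin 4 → ℂ =>
          h ![Complex.normSq (z 0), Complex.normSq (z 1), Complex.normSq (z 2),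
              Complex.normSq (z 3), ((z 0) ^ 2 * (starRingEnd ℂ) (z 2)).re,
              ((z 1) ^ 2 * (starRingEnd ℂ) (z 3)).re] -
          ((a₃ / 2) * (Complex.normSq (z 0) + 2 * Complex.normSq (z 2)) +
           ξ₂ * (Complex.normSq (z 1) + 2 * Complex.normSq (z 3)))))
        ![0, 0, (C : ℂ), 0]
        ![(x : ℂ) + (y : ℂ) * Complex.I, 0, 0, 0]
        ![(x : ℂ) + (y : ℂ) * Complex.I, 0, 0, 0] =
      2 * (a₁ - a₃ / 2 + C * b₁) * x ^ 2 + 2 * (a₁ - a₃ / 2 - C * b₁) * y ^ 2 := by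
  intro x y
  set u : ℂ := x + y * I
  set ℓ := momentPairing (a₃ / 2) ξ₂
  change fderiv ℝ (fderiv ℝ ((fun X => h X - ℓ X) ∘ invariants)) _ _ _ = _
  rw [fderiv_fderiv_comp_invariants_apply (hC2.sub ℓ.contDiff),
    fderiv_fun_sub (hC2.differentiable two_ne_zero _) ℓ.differentiableAt, ℓ.fderiv]
  have hw : ![normSq u, 0, 0, 0, C * (u ^ 2).re, 0] =
      normSq u • Pi.single (0 : Fin 6) (1 : ℝ) + (C * (u ^ 2).re) • Pi.single (4 : Fin 6) 1 := by
    funext i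
    fin_cases i <;> simp
  simp only [sub_apply, hw, map_add, map_smul, ← ha₁, ← hb₁]
  simp [ℓ, momentPairing, u, normSq_apply, pow_two]
  ring

/-- The second derivative of the augmented Hamiltonian `H − J^ξ`,
`ξ = (a₃/2, ξ₂)`, at `z_e = (0, 0, C, 0)` on the `z₁`-plane is
`2(a₁ − a₃/2 + C b₁) x² + 2(a₁ − a₃/2 − C b₁) y²` in the direction `(x + iy, 0, 0, 0)`,
exhibiting the eigenvalues `λ₁⁺ = a₁ − a₃/2 + C b₁` and `λ₁⁻ = a₁ − a₃/2 − C b₁`. -/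
theorem stmt_17 (h : (Fin 6 → ℝ) → ℝ) (hC2 : ContDiff ℝ 2 h) (C ξ₂ : ℝ)
    (a₁ a₃ b₁ : ℝ)
    (ha₁ : a₁ = fderiv ℝ h ![0, 0, C ^ 2, 0, 0, 0] (Pi.single (0 : Fin 6) (1 : ℝ)))
    (ha₃ : a₃ = fderiv ℝ h ![0, 0, C ^ 2, 0, 0, 0] (Pi.single (2 : Fin 6) (1 : ℝ)))
    (hb₁ : b₁ = fderiv ℝ h ![0, 0, C ^ 2, 0, 0, 0] (Pi.single (4 : Fin 6) (1 : ℝ))) :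
    ∀ x y : ℝ,
      fderiv ℝ (fderiv ℝ (fun z : Fin 4 → ℂ =>
          h ![Complex.normSq (z 0), Complex.normSq (z 1), Complex.normSq (z 2),
              Complex.normSq (z 3), ((z 0) ^ 2 * (starRingEnd ℂ) (z 2)).re,
              ((z 1) ^ 2 * (starRingEnd ℂ) (z 3)).re] -
          ((a₃ / 2) * (Complex.normSq (z 0) + 2 * Complex.normSq (z 2)) +
           ξ₂ * (Complex.normSq (z 1) + 2 * Complex.normSq (z 3)))))
        ![0, 0, (C : ℂ), 0]
        ![(x : ℂ) + (y : ℂ) * Complex.I, 0, 0, 0]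
        ![(x : ℂ) + (y : ℂ) * Complex.I, 0, 0, 0] =
      2 * (a₁ - a₃ / 2 + C * b₁) * x ^ 2 + 2 * (a₁ - a₃ / 2 - C * b₁) * y ^ 2 :=
  stmt_17_general h hC2 C ξ₂ a₁ a₃ b₁ ha₁ hb₁
end
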